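/- Let a and b be real numbers and n a nonnegative integer such that (b−a+1)_k ≠ 0 for all 0 ≤ k ≤ n. Then Σ_{k=0}^{n} [(a)_k (b)_k / ((b−a+1)_k k!)] (b+2k) = (a+1)_n (b)_{n+1} / ((b−a+1)_n n!). -/

import Mathlib

/-- The Pochhammer symbol (rising factorial) `(a)_k = a (a+1) ⋯ (a+k-1)`. -/
noncomputable def poch (a : ℝ) (k : ℕ) : ℝ := (ascPochhammer ℝ k).eval a

lemma poch_zero (a : ℝ) : poch a 0 = 1 := by simp [poch]

lemma poch_succ (a : ℝ) (k : ℕ) : poch a (k + 1) = poch a k * (a + k) := by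
  simp [poch, ascPochhammer_succ_right]

lemma poch_one_succ (a : ℝ) (k : ℕ) : poch a (k + 1) = a * poch (a + 1) k := by
  simp [poch, ascPochhammer_succ_left, Polynomial.eval_comp, mul_comm]

/-- `Σ_{k=0}^{n} [(a)_k (b)_k / ((b−a+1)_k k!)] (b+2k) = (a+1)_n (b)_{n+1} / ((b−a+1)_n n!)`. -/
theorem sum_formula_F (a b : ℝ) (n : ℕ)
    (h : ∀ k ≤ n, poch (b - a + 1) k ≠ 0) :
    ∑ k ∈ Finset.range (n + 1),
      poch a k * poch b k / (poch (b - a + 1) k * Nat.factorial k) * (b + 2 * k)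
    = poch (a + 1) n * poch b (n + 1) / (poch (b - a + 1) n * Nat.factorial n) := by
  induction n with
  | zero => simp [poch_zero, poch_succ]
  | succ n ih =>
    have hn : poch (b - a + 1) n ≠ 0 := h n (by omega)
    have hn1 : poch (b - a + 1) (n + 1) ≠ 0 := h (n + 1) le_rfl
    have hf : (Nat.factorial n : ℝ) ≠ 0 := by positivity
    have hf1 : (Nat.factorial (n + 1) : ℝ) ≠ 0 := by positivity
    rw [Finset.sum_range_succ, ih (fun k hk => h k (by omega))]
    rw [poch_succ (b - a + 1) n] at hn1
    rw [poch_one_succ a n, poch_succ (a + 1) n, poch_succ b (n + 1),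
      poch_succ (b - a + 1) n, Nat.factorial_succ]
    have hn2 : b - a + 1 + (n : ℝ) ≠ 0 := right_ne_zero_of_mul hn1
    field_simp
    push_cast
    ring
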